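/- Let 2 ≤ t ≤ n, n = (t+1)p + d with 0 ≤ d ≤ t, and i ≤ j < n. If β_{i,j}(R/I_t(C_n)) ≠ 0, then j ≤ it. -/

import Mathlib

open Finset

def SC.facesC (Δ : Set (Finset ℕ)) (c : ℤ) : Type :=
  {F : Finset ℕ // F ∈ Δ ∧ (F.card : ℤ) = c}

open Classical in
noncomputable def SC.bdry (K : Type) [Field K] (Δ : Set (Finset ℕ)) (a b : ℤ) :
    (SC.facesC Δ a →₀ K) →ₗ[K] (SC.facesC Δ b →₀ K) :=
  Finsupp.lsum K fun F => LinearMap.toSpanSingleton K _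
    (∑ x ∈ F.1, if h : F.1.erase x ∈ Δ ∧ (((F.1.erase x).card : ℤ) = b)
      then ((-1 : K) ^ (F.1.filter (fun y => y < x)).card) •
        Finsupp.single (⟨F.1.erase x, h⟩ : SC.facesC Δ b) (1 : K)
      else 0)

noncomputable def SC.hdim (K : Type) [Field K] (Δ : Set (Finset ℕ)) (i : ℤ) : ℕ :=
  Module.finrank K (LinearMap.ker (SC.bdry K Δ (i + 1) i)) -
    Module.finrank K (LinearMap.range (SC.bdry K Δ (i + 2) (i + 1)))

def SC.gen (S : Set (Finset ℕ)) : Set (Finset ℕ) := {F | ∃ A ∈ S, F ⊆ A}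

/-- The facet `F_a = {x_a, …, x_{a+t-1}}` (indices mod `n`, vertices `0, …, n-1`). -/
def cycForm (n t a : ℕ) : Finset ℕ := (Finset.range t).image (fun k => (a + k) % n)

/-- The facets of the path complex `Δ_t(C_n)` of the cycle. -/
def cycFacets (n t : ℕ) : Finset (Finset ℕ) := (Finset.range n).image (cycForm n t)

/-- The Stanley–Reisner complex on vertex set `{0,…,n-1}` of the squarefree monomial ideal
whose minimal generators have supports `Gens`. -/
def SRcomplex (n : ℕ) (Gens : Finset (Finset ℕ)) : Set (Finset ℕ) :=
  {F | F ⊆ Finset.range n ∧ ¬ ∃ G ∈ Gens, G ⊆ F}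

open Classical in
/-- The graded Betti number `β_{i,j}(R/I)` of the squarefree monomial ideal
`I ⊆ K[x_0,…,x_{n-1}]` with generator supports `Gens`, characterized by
Hochster's formula: `β_{i,j}(R/I) = Σ_{W, |W| = j} dim_K H̃_{j-i-1}((Δ_I)|_W; K)`. -/
noncomputable def betti (K : Type) [Field K] (n : ℕ) (Gens : Finset (Finset ℕ)) (i j : ℕ) : ℕ :=
  ∑ W ∈ (Finset.range n).powersetCard j,
    SC.hdim K {F | F ∈ SRcomplex n Gens ∧ F ⊆ W} ((j : ℤ) - i - 1)

/-- Betti numbers of `R/I_t(C_n)`. -/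
noncomputable def bettiCycle (K : Type) [Field K] (n t i j : ℕ) : ℕ :=
  betti K n (cycFacets n t) i j

/-- The facets of a run of length `s` (for path length `t`) starting at vertex `a`:
`F_i = {a+i, …, a+i+t-1}` for `0 ≤ i < s`. -/
def runFacets (t a s : ℕ) : Set (Finset ℕ) := {F | ∃ i < s, F = Finset.Ico (a + i) (a + i + t)}

/-- Facets of a disjoint union of runs of lengths `L`, laid out left to right starting
at vertex `a`, with a gap between consecutive runs. -/
def runsFacets (t : ℕ) : ℕ → List ℕ → Set (Finset ℕ)
  | _, [] => ∅
  | a, s :: L => runFacets t a s ∪ runsFacets t (a + s + t) L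

/-- Vertex set of the above disjoint union of runs (a run of length `s` has `s+t-1` vertices). -/
def runsVerts (t : ℕ) : ℕ → List ℕ → Finset ℕ
  | _, [] => ∅
  | a, s :: L => Finset.Ico a (a + s + t - 1) ∪ runsVerts t (a + s + t) L

/-- `E(s_1,…,s_r)`: the complex generated by the complements, within the total vertex set,
of the facets of a disjoint union of runs of lengths `s_1, …, s_r`. -/
def EC (t : ℕ) (L : List ℕ) : Set (Finset ℕ) :=
  SC.gen {G | ∃ F ∈ runsFacets t 0 L, G = runsVerts t 0 L \ F}

/-!
By Hochster's formula, `β_{i,j} ≠ 0` yields a set `W` of `j` vertices on which the restricted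
Stanley–Reisner complex has nonzero reduced homology in degree `j - i - 1`. Taylor's bound turns
this into a cover: if the complex of subsets of `V` containing no member of `𝒢` has nonzero
homology in degree `|V| - i - 1`, then some `i` members of `𝒢` have total size at least `|V|`.
Since every generator of `I_t(C_n)` has `t` elements, `j ≤ i t`.

Taylor's bound is proved by induction on `|𝒢|`. If `𝒢` is empty the complex is a cone, hence
acyclic. Otherwise pick `G ∈ 𝒢`; the complex for `𝒢` is the deletion of the face `G` from the
complex `Δ` for `𝒢 \ {G}`, and `C(deletion) → C(Δ) → C(link G)[-|G|]` is a short exact sequence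
of chain complexes. Nonzero homology of the deletion therefore survives either in `Δ` or, in
degree lowered by `|G| - 1`, in the link of `G`, which is the complex on `V \ G` for the sets
`G' \ G`; in the second case `G` joins the cover obtained from the link.
-/

lemma Finsupp.lhom_ext_single_one {R α M : Type*} [Semiring R] [AddCommMonoid M] [Module R M]
    {f g : (α →₀ R) →ₗ[R] M} (h : ∀ a, f (Finsupp.single a 1) = g (Finsupp.single a 1)) :
    f = g :=
  Finsupp.lhom_ext' fun a => LinearMap.ext_ring (h a)

namespace SC

variable {K : Type} [Field K]

lemma neg_one_pow_mul_self (n : ℕ) : (-1 : K) ^ n * (-1) ^ n = 1 := by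
  rw [← mul_pow, neg_one_mul, neg_neg, one_pow]

section Sign

variable (K) in
noncomputable def sign (F : Finset ℕ) (x : ℕ) : K := (-1) ^ #(F.filter (· < x))

variable {F : Finset ℕ} {u x y : ℕ}

lemma sign_mul_self (F : Finset ℕ) (x : ℕ) : sign K F x * sign K F x = 1 :=
  neg_one_pow_mul_self _

lemma sign_erase_of_le (h : x ≤ u) : sign K (F.erase u) x = sign K F x := by
  rw [sign, filter_erase, erase_eq_of_notMem (by simp [h.not_gt]), sign]

lemma sign_erase_of_lt (hu : u ∈ F) (h : u < x) : sign K (F.erase u) x = -sign K F x := by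
  have hmem : u ∈ F.filter (· < x) := mem_filter.mpr ⟨hu, h⟩
  rw [sign, sign, filter_erase, ← card_erase_add_one hmem, pow_succ, mul_neg_one, neg_neg]

lemma sign_insert_of_le (h : x ≤ u) : sign K (insert u F) x = sign K F x := by
  rw [sign, filter_insert, if_neg h.not_gt, sign]

lemma sign_insert_of_lt (hu : u ∉ F) (h : u < x) : sign K (insert u F) x = -sign K F x := by
  rw [sign, filter_insert, if_pos h, card_insert_of_notMem (by simp [hu]), pow_succ, mul_neg_one,
    sign]

lemma sign_mul_sign_erase_comm (hx : x ∈ F) (hy : y ∈ F) (hxy : x ≠ y) :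
    sign K F x * sign K (F.erase x) y = -(sign K F y * sign K (F.erase y) x) := by
  rcases hxy.lt_or_gt with h | h
  · rw [sign_erase_of_lt hx h, sign_erase_of_le h.le]
    ring
  · rw [sign_erase_of_le h.le, sign_erase_of_lt hy h]
    ring

lemma sign_mul_sign_insert (hx : x ∈ F) (hu : u ∉ F) :
    sign K F u * sign K (insert u F) x = -(sign K F x * sign K (F.erase x) u) := by
  have hxu : x ≠ u := fun h => hu (h ▸ hx)
  rcases hxu.lt_or_gt with h | h
  · rw [sign_insert_of_le h.le, sign_erase_of_lt hx h]
    ring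
  · rw [sign_insert_of_lt hu h, sign_erase_of_le h.le]
    ring

end Sign

section Chains

open Finsupp

variable {Δ Δ' : Set (Finset ℕ)} {a b c : ℤ} {s : Finset ℕ}

variable (K Δ a) in
open Classical in
/-- Zero unless `s` is a face of `Δ` of cardinality `a`: the maps built with `chainMap` below
rely on this to discard the faces that fall outside their target complex. -/
noncomputable def faceChain (s : Finset ℕ) : facesC Δ a →₀ K :=
  if h : s ∈ Δ ∧ (#s : ℤ) = a then single (⟨s, h⟩ : facesC Δ a) 1 else 0

lemma faceChain_val (F : facesC Δ a) : faceChain K Δ a F.1 = single F 1 :=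
  dif_pos F.2

lemma faceChain_of_notMem (hs : s ∉ Δ) : faceChain K Δ a s = 0 :=
  dif_neg fun h => hs h.1

lemma faceChain_of_card_ne (hs : (#s : ℤ) ≠ a) : faceChain K Δ a s = 0 :=
  dif_neg fun h => hs h.2

lemma natCast_card_erase {F : Finset ℕ} {x : ℕ} (hx : x ∈ F) :
    (#(F.erase x) : ℤ) = #F - 1 := by
  rw [card_erase_of_mem hx, Nat.cast_sub (card_pos.mpr ⟨x, hx⟩), Nat.cast_one]

lemma bdry_single (F : facesC Δ a) :
    bdry K Δ a b (single F 1) =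
      ∑ x ∈ F.1, sign K F.1 x • faceChain K Δ b (F.1.erase x) := by
  simp only [bdry, coe_lsum, sum_single_index, map_zero, LinearMap.toSpanSingleton_apply_one]
  exact sum_congr rfl fun x _ => by rw [faceChain, smul_dite, smul_zero]; rfl

lemma bdry_faceChain (hs : s ∈ Δ) (hb : b = a - 1) :
    bdry K Δ a b (faceChain K Δ a s) =
      ∑ x ∈ s, sign K s x • faceChain K Δ b (s.erase x) := by
  by_cases hsa : (#s : ℤ) = a
  · exact (congrArg _ (faceChain_val (⟨s, hs, hsa⟩ : facesC Δ a))).trans (bdry_single _)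
  · rw [faceChain_of_card_ne hsa, map_zero]
    refine (sum_eq_zero fun x hx => ?_).symm
    rw [faceChain_of_card_ne (by rw [natCast_card_erase hx]; omega), smul_zero]

lemma bdry_bdry_faceChain (hΔ : IsLowerSet Δ) (hs : s ∈ Δ) (hb : b = a - 1) (hc : c = b - 1) :
    bdry K Δ b c (bdry K Δ a b (faceChain K Δ a s)) = 0 := by
  rw [bdry_faceChain hs hb, map_sum]
  simp only [map_smul, bdry_faceChain (hΔ (erase_subset _ _) hs) hc, Finset.smul_sum, smul_smul]
  rw [sum_sigma']
  refine sum_involution (fun p _ => ⟨p.2, p.1⟩) ?_ ?_ ?_ fun _ _ => rfl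
  · rintro ⟨x, y⟩ hp
    simp only [mem_sigma, mem_erase] at hp
    rw [erase_right_comm, sign_mul_sign_erase_comm hp.1 hp.2.2 (Ne.symm hp.2.1), neg_smul,
      neg_add_cancel]
  · rintro ⟨x, y⟩ hp _ hswap
    simp only [mem_sigma, mem_erase] at hp
    exact hp.2.1 (congrArg Sigma.fst hswap)
  · rintro ⟨x, y⟩ hp
    simp only [mem_sigma, mem_erase] at hp ⊢
    exact ⟨hp.2.2, Ne.symm hp.2.1, hp.1⟩

lemma bdry_bdry (hΔ : IsLowerSet Δ) (hb : b = a - 1) (hc : c = b - 1) (z : facesC Δ a →₀ K) :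
    bdry K Δ b c (bdry K Δ a b z) = 0 :=
  LinearMap.congr_fun (f := (bdry K Δ b c).comp (bdry K Δ a b)) (g := 0)
    (lhom_ext_single_one fun F =>
      faceChain_val (K := K) F ▸ bdry_bdry_faceChain hΔ F.2.1 hb hc) z

variable (K Δ Δ' a b) in
noncomputable def chainMap (f : Finset ℕ → K) (g : Finset ℕ → Finset ℕ) :
    (facesC Δ a →₀ K) →ₗ[K] (facesC Δ' b →₀ K) :=
  linearCombination K fun F => f F.1 • faceChain K Δ' b (g F.1)

lemma chainMap_single (f : Finset ℕ → K) (g : Finset ℕ → Finset ℕ) (F : facesC Δ a) :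
    chainMap K Δ Δ' a b f g (single F 1) = f F.1 • faceChain K Δ' b (g F.1) := by
  rw [chainMap, linearCombination_single, one_smul]

lemma chainMap_faceChain (f : Finset ℕ → K) (g : Finset ℕ → Finset ℕ) (hs : s ∈ Δ)
    (hsa : (#s : ℤ) = a) :
    chainMap K Δ Δ' a b f g (faceChain K Δ a s) = f s • faceChain K Δ' b (g s) := by
  rw [faceChain_val (⟨s, hs, hsa⟩ : facesC Δ a)]
  exact chainMap_single f g _

end Chains

section Homology

variable {Δ : Set (Finset ℕ)}

lemma finite_facesC (hfin : Δ.Finite) (a : ℤ) : Finite (facesC Δ a) :=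
  have := hfin.to_subtype
  Finite.of_injective (fun F : facesC Δ a => (⟨F.1, F.2.1⟩ : Δ))
    fun (_ _ : facesC Δ a) h => Subtype.ext (congrArg (fun s : Δ => s.1) h)

lemma range_bdry_le_ker_bdry (hΔ : IsLowerSet Δ) (c : ℤ) :
    LinearMap.range (bdry K Δ (c + 2) (c + 1)) ≤ LinearMap.ker (bdry K Δ (c + 1) c) := by
  rintro _ ⟨w, rfl⟩
  exact bdry_bdry hΔ (by ring) (by ring) w

lemma hdim_eq_zero_iff (hfin : Δ.Finite) (hΔ : IsLowerSet Δ) (c : ℤ) :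
    hdim K Δ c = 0 ↔
      LinearMap.ker (bdry K Δ (c + 1) c) ≤ LinearMap.range (bdry K Δ (c + 2) (c + 1)) := by
  have := finite_facesC hfin (c + 1)
  have hle := range_bdry_le_ker_bdry (K := K) hΔ c
  rw [hdim, Nat.sub_eq_zero_iff_le]
  exact ⟨fun h => (Submodule.eq_of_le_of_finrank_le hle h).ge,
    fun h => Submodule.finrank_mono h⟩

lemma hdim_eq_zero_of_isEmpty (hfin : Δ.Finite) (hΔ : IsLowerSet Δ) {c : ℤ}
    (h : IsEmpty (facesC Δ (c + 1))) : hdim K Δ c = 0 :=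
  (hdim_eq_zero_iff hfin hΔ c).mpr fun z _ => Subsingleton.elim z 0 ▸ zero_mem _

lemma exists_bdry_eq_of_hdim_eq_zero (hfin : Δ.Finite) (hΔ : IsLowerSet Δ) {a b c : ℤ}
    (ha : a = c + 1) (hb : b = c + 2) (h : hdim K Δ c = 0) {z : facesC Δ a →₀ K}
    (hz : bdry K Δ a c z = 0) : ∃ w, bdry K Δ b a w = z := by
  subst ha hb
  exact (hdim_eq_zero_iff hfin hΔ c).mp h hz

end Homology

section Cone

variable {Δ : Set (Finset ℕ)} {v : ℕ} {a b c : ℤ} {s : Finset ℕ}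

def IsCone (Δ : Set (Finset ℕ)) (v : ℕ) : Prop := ∀ ⦃F⦄, F ∈ Δ → insert v F ∈ Δ

variable (K Δ a b v) in
noncomputable def coneHomotopy : (facesC Δ a →₀ K) →ₗ[K] (facesC Δ b →₀ K) :=
  chainMap K Δ Δ a b (fun s => sign K s v) (insert v)

lemma coneHomotopy_faceChain_of_mem (hs : s ∈ Δ) (hsa : (#s : ℤ) = a) (hb : b = a + 1)
    (hv : v ∈ s) : coneHomotopy K Δ v a b (faceChain K Δ a s) = 0 := by
  rw [coneHomotopy, chainMap_faceChain _ _ hs hsa, insert_eq_of_mem hv,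
    faceChain_of_card_ne (by omega), smul_zero]

lemma bdry_coneHomotopy_add_of_mem (hΔ : IsLowerSet Δ) (hs : s ∈ Δ) (hsa : (#s : ℤ) = a)
    (hb : b = a + 1) (hc : c = a - 1) (hv : v ∈ s) :
    bdry K Δ b a (coneHomotopy K Δ v a b (faceChain K Δ a s)) +
      coneHomotopy K Δ v c a (bdry K Δ a c (faceChain K Δ a s)) = faceChain K Δ a s := by
  have hterm : ∀ x ∈ s, sign K s x • coneHomotopy K Δ v c a (faceChain K Δ c (s.erase x)) =
      if x = v then faceChain K Δ a s else 0 := by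
    intro x hx
    rw [coneHomotopy, chainMap_faceChain _ _ (hΔ (erase_subset _ _) hs)
      (by rw [natCast_card_erase hx]; omega)]
    split_ifs with hxv
    · subst hxv
      rw [insert_erase hx, smul_smul, sign_erase_of_le le_rfl, sign_mul_self, one_smul]
    · rw [insert_eq_of_mem (mem_erase.mpr ⟨Ne.symm hxv, hv⟩),
        faceChain_of_card_ne (by rw [natCast_card_erase hx]; omega), smul_zero, smul_zero]
  rw [coneHomotopy_faceChain_of_mem hs hsa hb hv, map_zero, zero_add, bdry_faceChain hs hc,
    map_sum]
  simp only [map_smul]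
  rw [sum_congr rfl hterm, sum_ite_eq' s v, if_pos hv]

lemma bdry_coneHomotopy_add_of_notMem (hΔ : IsLowerSet Δ) (hΔv : IsCone Δ v) (hs : s ∈ Δ)
    (hsa : (#s : ℤ) = a) (hb : b = a + 1) (hc : c = a - 1) (hv : v ∉ s) :
    bdry K Δ b a (coneHomotopy K Δ v a b (faceChain K Δ a s)) +
      coneHomotopy K Δ v c a (bdry K Δ a c (faceChain K Δ a s)) = faceChain K Δ a s := by
  have hcancel : ∀ x ∈ s,
      sign K s v • sign K (insert v s) x • faceChain K Δ a ((insert v s).erase x) +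
        sign K s x • coneHomotopy K Δ v c a (faceChain K Δ c (s.erase x)) = 0 := by
    intro x hx
    rw [coneHomotopy, chainMap_faceChain _ _ (hΔ (erase_subset _ _) hs)
      (by rw [natCast_card_erase hx]; omega), smul_smul, smul_smul,
      erase_insert_of_ne (ne_of_mem_of_not_mem hx hv).symm, sign_mul_sign_insert hx hv, neg_smul,
      neg_add_cancel]
  rw [coneHomotopy, chainMap_faceChain _ _ hs hsa, map_smul,
    bdry_faceChain (hΔv hs) (by omega : a = b - 1), sum_insert hv, erase_insert hv, smul_add,
    smul_smul, sign_insert_of_le le_rfl, sign_mul_self, one_smul, bdry_faceChain hs hc, map_sum,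
    add_assoc, Finset.smul_sum, ← sum_add_distrib]
  simp only [map_smul]
  rw [sum_eq_zero hcancel, add_zero]

lemma bdry_comp_coneHomotopy_add (hΔ : IsLowerSet Δ) (hΔv : IsCone Δ v) (hb : b = a + 1)
    (hc : c = a - 1) :
    bdry K Δ b a ∘ₗ coneHomotopy K Δ v a b + coneHomotopy K Δ v c a ∘ₗ bdry K Δ a c =
      LinearMap.id := by
  refine Finsupp.lhom_ext_single_one fun F => ?_
  rw [← faceChain_val]
  by_cases hv : v ∈ F.1
  · exact bdry_coneHomotopy_add_of_mem hΔ F.2.1 F.2.2 hb hc hv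
  · exact bdry_coneHomotopy_add_of_notMem hΔ hΔv F.2.1 F.2.2 hb hc hv

lemma hdim_eq_zero_of_isCone (hfin : Δ.Finite) (hΔ : IsLowerSet Δ) (hΔv : IsCone Δ v)
    (c : ℤ) : hdim K Δ c = 0 := by
  refine (hdim_eq_zero_iff hfin hΔ c).mpr fun z hz =>
    ⟨coneHomotopy K Δ v (c + 1) (c + 2) z, ?_⟩
  have := LinearMap.congr_fun (bdry_comp_coneHomotopy_add (K := K) hΔ hΔv (a := c + 1)
    (b := c + 2) (c := c) (by ring) (by ring)) z
  rwa [LinearMap.add_apply, LinearMap.comp_apply, LinearMap.comp_apply,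
    LinearMap.mem_ker.mp hz, map_zero, add_zero, LinearMap.id_apply] at this

end Cone

section ShuffleSign

variable {G s : Finset ℕ} {x : ℕ}

variable (K) in
/-- The sign of the shuffle listing `s \ G` before `G`. -/
noncomputable def shuffleSign (G s : Finset ℕ) : K := ∏ u ∈ G, sign K (s \ G) u

lemma shuffleSign_mul_self (G s : Finset ℕ) : shuffleSign K G s * shuffleSign K G s = 1 := by
  rw [shuffleSign, ← prod_mul_distrib, prod_congr rfl fun u _ => sign_mul_self _ u,
    prod_const_one]

lemma sign_eq_sign_sdiff_mul (hG : G ⊆ s) :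
    sign K s x = sign K (s \ G) x * (-1) ^ #(G.filter (· < x)) := by
  rw [sign, sign, ← pow_add, ← card_union_of_disjoint (disjoint_filter_filter sdiff_disjoint),
    ← filter_union, sdiff_union_of_subset hG]

lemma shuffleSign_erase (hx : x ∈ s) (hxG : x ∉ G) :
    shuffleSign K G (s.erase x) = (-1) ^ #(G.filter (x < ·)) * shuffleSign K G s := by
  have hx' : x ∈ s \ G := mem_sdiff.mpr ⟨hx, hxG⟩
  have hfactor : ∀ u ∈ G, sign K ((s \ G).erase x) u =
      (if x < u then -1 else 1) * sign K (s \ G) u := by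
    intro u _
    split_ifs with h
    · rw [sign_erase_of_lt hx' h, neg_one_mul]
    · rw [sign_erase_of_le (not_lt.mp h), one_mul]
  rw [shuffleSign, erase_sdiff_comm, prod_congr rfl hfactor, prod_mul_distrib, prod_ite,
    prod_const, prod_const_one, mul_one, shuffleSign]

lemma sign_mul_shuffleSign_erase (hG : G ⊆ s) (hx : x ∈ s) (hxG : x ∉ G) :
    sign K s x * shuffleSign K G (s.erase x) =
      (-1) ^ #G * (shuffleSign K G s * sign K (s \ G) x) := by
  have hgt : G.filter (x < ·) = G.filter (¬· < x) := filter_congr fun u hu => by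
    have := ne_of_mem_of_not_mem hu hxG
    show x < u ↔ ¬u < x
    omega
  have hsplit : #(G.filter (· < x)) + #(G.filter (x < ·)) = #G := by
    rw [hgt]
    exact card_filter_add_card_filter_not _
  rw [sign_eq_sign_sdiff_mul hG, shuffleSign_erase hx hxG, ← hsplit, pow_add]
  ring

end ShuffleSign

section DeletionLink

variable {Δ : Set (Finset ℕ)} {G s : Finset ℕ} {a a' b b' : ℤ}

def deletion (Δ : Set (Finset ℕ)) (G : Finset ℕ) : Set (Finset ℕ) :=
  {F | F ∈ Δ ∧ ¬G ⊆ F}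

def link (Δ : Set (Finset ℕ)) (G : Finset ℕ) : Set (Finset ℕ) :=
  {F | Disjoint F G ∧ F ∪ G ∈ Δ}

lemma isLowerSet_deletion (hΔ : IsLowerSet Δ) : IsLowerSet (deletion Δ G) :=
  fun _ _ hts hs => ⟨hΔ hts hs.1, fun hG => hs.2 (hG.trans hts)⟩

lemma isLowerSet_link (hΔ : IsLowerSet Δ) : IsLowerSet (link Δ G) :=
  fun _ _ hts hs => ⟨hs.1.mono_left hts, hΔ (union_subset_union hts subset_rfl) hs.2⟩

lemma finite_deletion (hfin : Δ.Finite) : (deletion Δ G).Finite :=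
  hfin.subset fun _ hs => hs.1

lemma finite_link (hfin : Δ.Finite) : (link Δ G).Finite :=
  (hfin.image (· \ G)).subset fun s hs => ⟨s ∪ G, hs.2, union_sdiff_cancel_right hs.1⟩

variable (K Δ G a) in
noncomputable def deletionIncl :
    (facesC (deletion Δ G) a →₀ K) →ₗ[K] (facesC Δ a →₀ K) :=
  chainMap K _ _ a a 1 id

variable (K Δ G a) in
noncomputable def deletionRestr :
    (facesC Δ a →₀ K) →ₗ[K] (facesC (deletion Δ G) a →₀ K) :=
  chainMap K _ _ a a 1 id

variable (K Δ G a b) in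
noncomputable def linkProj : (facesC Δ a →₀ K) →ₗ[K] (facesC (link Δ G) b →₀ K) :=
  chainMap K _ _ a b (fun s => if G ⊆ s then shuffleSign K G s else 0) (· \ G)

variable (K Δ G a b) in
noncomputable def linkLift : (facesC (link Δ G) a →₀ K) →ₗ[K] (facesC Δ b →₀ K) :=
  chainMap K _ _ a b (fun s => shuffleSign K G (s ∪ G)) (· ∪ G)

lemma natCast_card_sdiff (hG : G ⊆ s) : (#(s \ G) : ℤ) = #s - #G := by
  rw [card_sdiff_of_subset hG, Nat.cast_sub (card_le_card hG)]

lemma deletionIncl_faceChain (hs : s ∈ deletion Δ G) :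
    deletionIncl K Δ G a (faceChain K _ a s) = faceChain K Δ a s := by
  by_cases hsa : (#s : ℤ) = a
  · rw [deletionIncl, chainMap_faceChain _ _ hs hsa, Pi.one_apply, one_smul, id]
  · rw [faceChain_of_card_ne hsa, faceChain_of_card_ne hsa, map_zero]

lemma deletionRestr_faceChain (hs : s ∈ Δ) :
    deletionRestr K Δ G a (faceChain K Δ a s) = faceChain K _ a s := by
  by_cases hsa : (#s : ℤ) = a
  · rw [deletionRestr, chainMap_faceChain _ _ hs hsa, Pi.one_apply, one_smul, id]
  · rw [faceChain_of_card_ne hsa, faceChain_of_card_ne hsa, map_zero]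

lemma linkProj_faceChain_of_subset (hs : s ∈ Δ) (hsa : (#s : ℤ) = a) (hG : G ⊆ s) :
    linkProj K Δ G a b (faceChain K Δ a s) = shuffleSign K G s • faceChain K _ b (s \ G) := by
  rw [linkProj, chainMap_faceChain _ _ hs hsa, if_pos hG]

lemma linkProj_faceChain_of_not_subset (hs : s ∈ Δ) (hG : ¬G ⊆ s) :
    linkProj K Δ G a b (faceChain K Δ a s) = 0 := by
  by_cases hsa : (#s : ℤ) = a
  · rw [linkProj, chainMap_faceChain _ _ hs hsa, if_neg hG, zero_smul]
  · rw [faceChain_of_card_ne hsa, map_zero]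

lemma linkLift_faceChain (hs : s ∈ link Δ G) (hsa : (#s : ℤ) = a) :
    linkLift K Δ G a b (faceChain K _ a s) =
      shuffleSign K G (s ∪ G) • faceChain K Δ b (s ∪ G) :=
  chainMap_faceChain _ _ hs hsa

lemma deletionRestr_comp_deletionIncl :
    deletionRestr K Δ G a ∘ₗ deletionIncl K Δ G a = LinearMap.id := by
  refine Finsupp.lhom_ext_single_one fun F => ?_
  rw [LinearMap.comp_apply, ← faceChain_val, deletionIncl_faceChain F.2.1,
    deletionRestr_faceChain F.2.1.1, LinearMap.id_apply]

lemma linkProj_comp_deletionIncl :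
    linkProj K Δ G a b ∘ₗ deletionIncl K Δ G a = 0 := by
  refine Finsupp.lhom_ext_single_one fun F => ?_
  rw [LinearMap.comp_apply, ← faceChain_val, deletionIncl_faceChain F.2.1,
    linkProj_faceChain_of_not_subset F.2.1.1 F.2.1.2, LinearMap.zero_apply]

lemma linkProj_comp_linkLift (hb : b = a + #G) :
    linkProj K Δ G b a ∘ₗ linkLift K Δ G a b = LinearMap.id := by
  refine Finsupp.lhom_ext_single_one fun F => ?_
  have hcard : (#(F.1 ∪ G) : ℤ) = b := by
    rw [card_union_of_disjoint F.2.1.1, Nat.cast_add, F.2.2, hb]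
  rw [LinearMap.comp_apply, ← faceChain_val, linkLift_faceChain F.2.1 F.2.2, map_smul,
    linkProj_faceChain_of_subset F.2.1.2 hcard subset_union_right, smul_smul,
    shuffleSign_mul_self, one_smul, union_sdiff_cancel_right F.2.1.1, LinearMap.id_apply]

lemma deletionIncl_comp_deletionRestr_add (hb : b = a - #G) :
    deletionIncl K Δ G a ∘ₗ deletionRestr K Δ G a +
      linkLift K Δ G b a ∘ₗ linkProj K Δ G a b = LinearMap.id := by
  refine Finsupp.lhom_ext_single_one fun F => ?_
  rw [LinearMap.add_apply, LinearMap.comp_apply, LinearMap.comp_apply, ← faceChain_val,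
    deletionRestr_faceChain F.2.1, LinearMap.id_apply]
  by_cases hG : G ⊆ F.1
  · have hlink : F.1 \ G ∈ link Δ G :=
      ⟨sdiff_disjoint, by rw [sdiff_union_of_subset hG]; exact F.2.1⟩
    rw [faceChain_of_notMem fun h => h.2 hG, map_zero, zero_add,
      linkProj_faceChain_of_subset F.2.1 F.2.2 hG, map_smul,
      linkLift_faceChain hlink (by rw [natCast_card_sdiff hG, F.2.2, hb]),
      sdiff_union_of_subset hG, smul_smul, shuffleSign_mul_self, one_smul]
  · rw [deletionIncl_faceChain ⟨F.2.1, hG⟩,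
      linkProj_faceChain_of_not_subset F.2.1 hG, map_zero, add_zero]

lemma bdry_comp_deletionIncl (hΔ : IsLowerSet Δ) (hb : b = a - 1) :
    bdry K Δ a b ∘ₗ deletionIncl K Δ G a =
      deletionIncl K Δ G b ∘ₗ bdry K (deletion Δ G) a b := by
  refine Finsupp.lhom_ext_single_one fun F => ?_
  rw [LinearMap.comp_apply, LinearMap.comp_apply, ← faceChain_val, deletionIncl_faceChain F.2.1,
    bdry_faceChain F.2.1.1 hb, bdry_faceChain F.2.1 hb, map_sum]
  refine sum_congr rfl fun x _ => ?_
  rw [map_smul, deletionIncl_faceChain (isLowerSet_deletion hΔ (erase_subset _ _) F.2.1)]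

lemma bdry_linkProj_faceChain_of_subset (hΔ : IsLowerSet Δ) (hs : s ∈ Δ) (hsa : (#s : ℤ) = a)
    (hG : G ⊆ s) (ha' : a' = a - #G) (hb : b = a - 1) (hb' : b' = a' - 1) :
    bdry K (link Δ G) a' b' (linkProj K Δ G a a' (faceChain K Δ a s)) =
      (-1 : K) ^ #G • linkProj K Δ G b b' (bdry K Δ a b (faceChain K Δ a s)) := by
  have hlink : s \ G ∈ link Δ G :=
    ⟨sdiff_disjoint, by rw [sdiff_union_of_subset hG]; exact hs⟩
  have hterm : ∀ x ∈ s \ G,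
      (-1 : K) ^ #G • sign K s x • linkProj K Δ G b b' (faceChain K Δ b (s.erase x)) =
      shuffleSign K G s • sign K (s \ G) x • faceChain K (link Δ G) b' ((s \ G).erase x) := by
    intro x hx
    obtain ⟨hxs, hxG⟩ := mem_sdiff.mp hx
    have hGx : G ⊆ s.erase x := fun u hu => mem_erase.mpr ⟨ne_of_mem_of_not_mem hu hxG, hG hu⟩
    rw [linkProj_faceChain_of_subset (hΔ (erase_subset _ _) hs)
      (by rw [natCast_card_erase hxs]; omega) hGx, erase_sdiff_comm]
    simp only [smul_smul]
    rw [sign_mul_shuffleSign_erase hG hxs hxG, ← mul_assoc, neg_one_pow_mul_self, one_mul]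
  have hzero : ∀ x ∈ G,
      (-1 : K) ^ #G • sign K s x • linkProj K Δ G b b' (faceChain K Δ b (s.erase x)) = 0 := by
    intro x hx
    rw [linkProj_faceChain_of_not_subset (hΔ (erase_subset _ _) hs)
      (fun h => notMem_erase x s (h hx)), smul_zero, smul_zero]
  rw [linkProj_faceChain_of_subset hs hsa hG, map_smul, bdry_faceChain hlink hb',
    Finset.smul_sum, bdry_faceChain hs hb, map_sum, Finset.smul_sum, ← sum_sdiff hG]
  simp only [map_smul]
  rw [sum_congr rfl hterm, sum_eq_zero hzero, add_zero]

lemma bdry_comp_linkProj (hΔ : IsLowerSet Δ) (ha' : a' = a - #G) (hb : b = a - 1)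
    (hb' : b' = a' - 1) :
    bdry K (link Δ G) a' b' ∘ₗ linkProj K Δ G a a' =
      (-1 : K) ^ #G • (linkProj K Δ G b b' ∘ₗ bdry K Δ a b) := by
  refine Finsupp.lhom_ext_single_one fun F => ?_
  rw [LinearMap.comp_apply, LinearMap.smul_apply, LinearMap.comp_apply, ← faceChain_val]
  by_cases hG : G ⊆ F.1
  · exact bdry_linkProj_faceChain_of_subset hΔ F.2.1 F.2.2 hG ha' hb hb'
  · have hterm : ∀ x ∈ F.1,
        linkProj K Δ G b b' (sign K F.1 x • faceChain K Δ b (F.1.erase x)) = 0 :=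
      fun x _ => by
        rw [map_smul, linkProj_faceChain_of_not_subset (hΔ (erase_subset _ _) F.2.1)
          fun h => hG (h.trans (erase_subset _ _)), smul_zero]
    rw [linkProj_faceChain_of_not_subset F.2.1 hG, map_zero, bdry_faceChain F.2.1 hb, map_sum,
      sum_eq_zero hterm, smul_zero]

end DeletionLink

section Chase

variable {Δ : Set (Finset ℕ)} {G : Finset ℕ} {c : ℤ}

lemma exists_bdry_eq_of_linkProj_eq_zero (hfin : Δ.Finite) (hΔ : IsLowerSet Δ)
    (hΔc : hdim K Δ c = 0) (hlink : hdim K (link Δ G) (c + 1 - #G) = 0)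
    {y : facesC Δ (c + 1) →₀ K} (hy : bdry K Δ (c + 1) c y = 0)
    (hπy : linkProj K Δ G (c + 1) (c + 1 - #G) y = 0) :
    ∃ w, bdry K Δ (c + 2) (c + 1) w = y ∧ linkProj K Δ G (c + 2) (c + 2 - #G) w = 0 := by
  obtain ⟨w, hw⟩ := exists_bdry_eq_of_hdim_eq_zero hfin hΔ rfl rfl hΔc hy
  have hπw : bdry K (link Δ G) (c + 2 - #G) (c + 1 - #G)
      (linkProj K Δ G (c + 2) (c + 2 - #G) w) = 0 := by
    have h := LinearMap.congr_fun (bdry_comp_linkProj (K := K) (G := G) hΔ (a := c + 2) rfl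
      (b := c + 1) (b' := c + 1 - #G) (by ring) (by ring)) w
    rwa [LinearMap.comp_apply, LinearMap.smul_apply, LinearMap.comp_apply, hw, hπy,
      smul_zero] at h
  obtain ⟨u, hu⟩ := exists_bdry_eq_of_hdim_eq_zero (finite_link hfin) (isLowerSet_link hΔ)
    (b := c + 3 - #G) (by ring) (by ring) hlink hπw
  set σu := linkLift K Δ G (c + 3 - #G) (c + 3) u
  have hπσu : bdry K (link Δ G) (c + 3 - #G) (c + 2 - #G) u =
      (-1 : K) ^ #G • linkProj K Δ G (c + 2) (c + 2 - #G) (bdry K Δ (c + 3) (c + 2) σu) := by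
    have h := LinearMap.congr_fun (bdry_comp_linkProj (K := K) (G := G) hΔ (a := c + 3) rfl
      (b := c + 2) (b' := c + 2 - #G) (by ring) (by ring)) σu
    rwa [LinearMap.comp_apply, LinearMap.smul_apply, LinearMap.comp_apply,
      ← LinearMap.comp_apply (linkProj K Δ G _ _), linkProj_comp_linkLift (by ring),
      LinearMap.id_apply] at h
  -- correcting `w` by the boundary of the lift of `u` kills its projection to the link
  refine ⟨w - (-1 : K) ^ #G • bdry K Δ (c + 3) (c + 2) σu, ?_, ?_⟩
  · rw [map_sub, map_smul, bdry_bdry hΔ (by ring) (by ring), smul_zero, sub_zero, hw]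
  · rw [map_sub, map_smul, ← hπσu, hu, sub_self]

lemma hdim_deletion_eq_zero (hfin : Δ.Finite) (hΔ : IsLowerSet Δ) (hΔc : hdim K Δ c = 0)
    (hlink : hdim K (link Δ G) (c + 1 - #G) = 0) : hdim K (deletion Δ G) c = 0 := by
  refine (hdim_eq_zero_iff (finite_deletion hfin) (isLowerSet_deletion hΔ) c).mpr fun z hz => ?_
  have hincl {a b : ℤ} (hb : b = a - 1) (x : facesC (deletion Δ G) a →₀ K) :
      bdry K Δ a b (deletionIncl K Δ G a x) = deletionIncl K Δ G b (bdry K _ a b x) :=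
    LinearMap.congr_fun (bdry_comp_deletionIncl hΔ hb) x
  obtain ⟨w, hw, hπw⟩ := exists_bdry_eq_of_linkProj_eq_zero hfin hΔ hΔc hlink
    (by rw [hincl (by ring), LinearMap.mem_ker.mp hz, map_zero])
    (LinearMap.congr_fun linkProj_comp_deletionIncl z)
  have hw' : deletionIncl K Δ G (c + 2) (deletionRestr K Δ G (c + 2) w) = w := by
    have h := LinearMap.congr_fun (deletionIncl_comp_deletionRestr_add (K := K) (G := G)
      (a := c + 2) (b := c + 2 - #G) rfl) w
    rwa [LinearMap.add_apply, LinearMap.comp_apply, LinearMap.comp_apply, hπw, map_zero,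
      add_zero, LinearMap.id_apply] at h
  have hleft : Function.LeftInverse (deletionRestr K Δ G (c + 1)) (deletionIncl K Δ G (c + 1)) :=
    LinearMap.congr_fun deletionRestr_comp_deletionIncl
  exact ⟨deletionRestr K Δ G (c + 2) w, hleft.injective (by rw [← hincl (by ring), hw', hw])⟩

end Chase

section IndepComplex

variable {V G : Finset ℕ} {𝒢 : Finset (Finset ℕ)}

/-- The restriction to `V` of the Stanley–Reisner complex of the ideal generated by the
monomials with supports in `𝒢`. -/
def indepComplex (V : Finset ℕ) (𝒢 : Finset (Finset ℕ)) : Set (Finset ℕ) :=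
  {F | F ⊆ V ∧ ∀ G ∈ 𝒢, ¬G ⊆ F}

lemma isLowerSet_indepComplex : IsLowerSet (indepComplex V 𝒢) :=
  fun _ _ hts hs => ⟨hts.trans hs.1, fun G hG hGt => hs.2 G hG (hGt.trans hts)⟩

lemma finite_indepComplex : (indepComplex V 𝒢).Finite :=
  V.powerset.finite_toSet.subset fun _ hF => mem_powerset.mpr hF.1

lemma isCone_indepComplex {v : ℕ} (hv : v ∈ V) (hfree : ∀ G ∈ 𝒢, v ∉ G) :
    IsCone (indepComplex V 𝒢) v := fun _ hF =>
  ⟨insert_subset hv hF.1, fun G hG hGF => hF.2 G hG fun _ hx =>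
    (mem_insert.mp (hGF hx)).resolve_left fun h => hfree G hG (h ▸ hx)⟩

lemma indepComplex_eq_deletion (hG : G ∈ 𝒢) :
    indepComplex V 𝒢 = deletion (indepComplex V (𝒢.erase G)) G := by
  ext F
  refine ⟨fun hF => ⟨⟨hF.1, fun G' hG' => hF.2 G' (mem_of_mem_erase hG')⟩, hF.2 G hG⟩,
    fun hF => ⟨hF.1.1, fun G' hG' hG'F => ?_⟩⟩
  by_cases h : G' = G
  · exact hF.2 (h ▸ hG'F)
  · exact hF.1.2 G' (mem_erase.mpr ⟨h, hG'⟩) hG'F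

lemma link_indepComplex (hGV : G ⊆ V) :
    link (indepComplex V (𝒢.erase G)) G =
      indepComplex (V \ G) ((𝒢.erase G).image (· \ G)) := by
  ext F
  have hfree :
      (∀ G' ∈ 𝒢.erase G, ¬G' ⊆ F ∪ G) ↔ ∀ H ∈ (𝒢.erase G).image (· \ G), ¬H ⊆ F := by
    simp only [mem_image, forall_exists_index, and_imp, forall_apply_eq_imp_iff₂]
    exact forall₂_congr fun _ _ => not_congr sdiff_le_iff'.symm
  change Disjoint F G ∧ F ∪ G ⊆ V ∧ _ ↔ F ⊆ V \ G ∧ _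
  rw [hfree, union_subset_iff, subset_sdiff]
  tauto

end IndepComplex

section TaylorBound

variable {V G : Finset ℕ} {𝒢 : Finset (Finset ℕ)}

lemma exists_lift_of_subset_image_sdiff (hG : G ∈ 𝒢) {S' : Finset (Finset ℕ)}
    (hS' : S' ⊆ (𝒢.erase G).image (· \ G)) :
    ∃ S ⊆ 𝒢, #S = #S' + 1 ∧ #G + ∑ H ∈ S', #H ≤ ∑ G' ∈ S, #G' := by
  obtain ⟨T, hT, hinj, rfl⟩ := exists_subset_injOn_image_eq_of_surjOn (f := (· \ G))
    (↑(𝒢.erase G)) S' fun H hH => by simpa [and_comm] using hS' hH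
  have hGT : G ∉ T := fun h => by simpa using hT h
  refine ⟨insert G T, insert_subset hG fun G' h => mem_of_mem_erase (hT h), ?_, ?_⟩
  · rw [card_insert_of_notMem hGT, card_image_of_injOn hinj]
  · rw [sum_insert hGT, sum_image hinj]
    gcongr with G' _
    exact sdiff_subset

lemma hdim_indepComplex_top_eq_zero (hG : G ∈ 𝒢) (hGV : G ⊆ V) {c : ℤ}
    (hc : c + 1 = #V) : hdim K (indepComplex V 𝒢) c = 0 := by
  refine hdim_eq_zero_of_isEmpty finite_indepComplex isLowerSet_indepComplex ⟨fun F => ?_⟩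
  have hFV : V ⊆ F.1 := (eq_of_subset_of_card_le F.2.1.1 (by have := F.2.2; omega)).ge
  exact F.2.1.2 G hG (hGV.trans hFV)

theorem exists_cover_of_hdim_indepComplex_ne_zero (h𝒢 : ∀ G ∈ 𝒢, G ⊆ V) {i : ℕ}
    (h : hdim K (indepComplex V 𝒢) (#V - i - 1) ≠ 0) :
    ∃ S ⊆ 𝒢, #S ≤ i ∧ #V ≤ ∑ G ∈ S, #G := by
  induction hn : #𝒢 using Nat.strong_induction_on generalizing 𝒢 V i with
  | _ n ih =>
  rcases V.eq_empty_or_nonempty with rfl | ⟨v, hv⟩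
  · exact ⟨∅, empty_subset _, by simp, by simp⟩
  rcases 𝒢.eq_empty_or_nonempty with rfl | ⟨G, hG⟩
  · exact absurd (hdim_eq_zero_of_isCone finite_indepComplex isLowerSet_indepComplex
      (isCone_indepComplex hv fun _ h => absurd h (notMem_empty _)) _) h
  have hGV := h𝒢 G hG
  rcases i.eq_zero_or_pos with rfl | hi
  · exact absurd (hdim_indepComplex_top_eq_zero hG hGV (by ring)) h
  have hlt : #(𝒢.erase G) < n := hn ▸ card_erase_lt_of_mem hG
  rw [indepComplex_eq_deletion hG] at h
  by_cases hdel : hdim K (indepComplex V (𝒢.erase G)) (#V - i - 1) = 0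
  · have hlink := mt (hdim_deletion_eq_zero finite_indepComplex isLowerSet_indepComplex hdel) h
    rw [link_indepComplex hGV, show (#V : ℤ) - i - 1 + 1 - #G = #(V \ G) - (i - 1 : ℕ) - 1 by
      rw [card_sdiff_of_subset hGV, Nat.cast_sub (card_le_card hGV), Nat.cast_sub hi]; ring]
      at hlink
    obtain ⟨S', hS', hS'i, hS'V⟩ := ih _ (card_image_le.trans_lt hlt)
      (fun H hH => by
        obtain ⟨G', hG', rfl⟩ := mem_image.mp hH
        exact sdiff_subset_sdiff (h𝒢 G' (mem_of_mem_erase hG')) subset_rfl) hlink rfl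
    obtain ⟨S, hS, hScard, hSsum⟩ := exists_lift_of_subset_image_sdiff hG hS'
    refine ⟨S, hS, by omega, ?_⟩
    have := card_sdiff_add_card_eq_card hGV
    omega
  · obtain ⟨S, hS, hSi, hSV⟩ := ih _ hlt (fun G' h' => h𝒢 G' (mem_of_mem_erase h')) hdel rfl
    exact ⟨S, hS.trans (erase_subset _ _), hSi, hSV⟩

end TaylorBound

end SC

open SC

lemma SRcomplex_restrict_eq_indepComplex {n : ℕ} {Gens : Finset (Finset ℕ)} {W : Finset ℕ}
    (hW : W ⊆ range n) :
    {F | F ∈ SRcomplex n Gens ∧ F ⊆ W} = indepComplex W (Gens.filter (· ⊆ W)) := by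
  ext F
  refine ⟨fun ⟨⟨_, hF⟩, hFW⟩ =>
      ⟨hFW, fun G hG hGF => hF ⟨G, (mem_filter.mp hG).1, hGF⟩⟩,
    fun ⟨hFW, hF⟩ => ⟨⟨hFW.trans hW, ?_⟩, hFW⟩⟩
  rintro ⟨G, hG, hGF⟩
  exact hF G (mem_filter.mpr ⟨hG, hGF.trans hFW⟩) hGF

theorem le_mul_of_betti_ne_zero {K : Type} [Field K] {n t i j : ℕ} {Gens : Finset (Finset ℕ)}
    (hGens : ∀ G ∈ Gens, #G ≤ t) (hb : betti K n Gens i j ≠ 0) : j ≤ i * t := by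
  obtain ⟨W, hW, hne⟩ := exists_ne_zero_of_sum_ne_zero hb
  obtain ⟨hWn, rfl⟩ := mem_powersetCard.mp hW
  rw [SRcomplex_restrict_eq_indepComplex hWn] at hne
  obtain ⟨S, hS, hSi, hSW⟩ :=
    exists_cover_of_hdim_indepComplex_ne_zero (fun G hG => (mem_filter.mp hG).2) hne
  calc #W ≤ ∑ G ∈ S, #G := hSW
    _ ≤ #S * t := sum_le_card_nsmul S _ t fun G hG => hGens G (mem_filter.mp (hS hG)).1
    _ ≤ i * t := Nat.mul_le_mul_right t hSi

lemma card_cycForm_le (n t a : ℕ) : #(cycForm n t a) ≤ t :=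
  card_image_le.trans (card_range t).le

theorem nonzero_betti_j_le_it_general (K : Type) [Field K] (n t i j : ℕ)
    (hb : bettiCycle K n t i j ≠ 0) : j ≤ i * t :=
  le_mul_of_betti_ne_zero (fun _ hG => by
    obtain ⟨a, -, rfl⟩ := mem_image.mp hG
    exact card_cycForm_le n t a) hb

/-- Theorem 5.4(1). If `2 ≤ t ≤ n`, `n = (t+1)p + d`, `0 ≤ d ≤ t`,
`i ≤ j < n` and `β_{i,j}(R/I_t(C_n)) ≠ 0`, then `j ≤ it`. -/
theorem nonzero_betti_j_le_it (K : Type) [Field K] (n t p d i j : ℕ) (ht2 : 2 ≤ t)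
    (htn : t ≤ n) (hd : d ≤ t) (hn : n = (t + 1) * p + d) (hij : i ≤ j) (hjn : j < n)
    (hb : bettiCycle K n t i j ≠ 0) : j ≤ i * t :=
  nonzero_betti_j_le_it_general K n t i j hb
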